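/- arXiv:1806.09813 — 4 statements merged into one kernel-verified Lean document; each statement's English description precedes it below -/
import Mathlib

section
/- Let d ≥ 1 be an integer, α_1, …, α_d real numbers with α_i > -1 for each i, λ = (d+1)^(d+1) and μ = ∏_{i=1}^d (α_i+1). Assume 2λμ > 1. Define the normalized hyper-Bessel function f(z) = ∑_{n≥0} A_n z^(n(d+1)+1) where A_n = (-1)^n / (n! (d+1)^(n(d+1)) ∏_{i=1}^d (α_i+1)_n). Then for all z in the open unit disk, |f(z)| ≤ (2λμ+1)/(2λμ-1). -/
/-!
Since `(β)ₙ ≥ βⁿ` and `n! ≥ 2ⁿ⁻¹`, the `n`-th coefficient satisfies `|Aₙ| ≤ 2 (2λμ)⁻ⁿ`, while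
`A₀ = 1`. On the closed unit disk the series is therefore dominated by
`1 + ∑_{n ≥ 1} 2 rⁿ = (1 + r) / (1 - r)` with `r = (2λμ)⁻¹ < 1`, which is `(2λμ + 1) / (2λμ - 1)`.
-/

open Complex

open Nat in
theorem Nat.two_pow_le_two_mul_factorial (n : ℕ) : 2 ^ n ≤ 2 * n ! := by
  cases n with
  | zero => simp
  | succ n =>
    have h := Nat.factorial_mul_pow_le_factorial (m := 1) (n := n)
    rw [pow_succ, mul_comm]
    simpa [add_comm] using Nat.mul_le_mul_left 2 h

theorem pow_le_ascPochhammer_eval {S : Type*} [Semiring S] [PartialOrder S] [IsOrderedRing S]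
    {s : S} (hs : 0 ≤ s) (n : ℕ) : s ^ n ≤ (ascPochhammer S n).eval s := by
  induction n with
  | zero => simp
  | succ n ih =>
    rw [ascPochhammer_succ_eval, pow_succ]
    exact mul_le_mul ih (le_add_of_nonneg_right n.cast_nonneg) hs ((pow_nonneg hs n).trans ih)

open Nat in
theorem pow_le_two_mul_factorial_mul_pow_mul_prod_ascPochhammer {ι : Type*} (s : Finset ι)
    {c : ℝ} (hc : 0 ≤ c) {β : ι → ℝ} (hβ : ∀ i ∈ s, 0 ≤ β i) (n : ℕ) :
    (2 * c * ∏ i ∈ s, β i) ^ n ≤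
      2 * (n ! * c ^ n * ∏ i ∈ s, (ascPochhammer ℝ n).eval (β i)) := by
  have hfac : (2 : ℝ) ^ n ≤ 2 * n ! := by exact_mod_cast Nat.two_pow_le_two_mul_factorial n
  have hprod : (∏ i ∈ s, β i) ^ n ≤ ∏ i ∈ s, (ascPochhammer ℝ n).eval (β i) := by
    rw [← Finset.prod_pow]
    exact Finset.prod_le_prod (fun i hi => pow_nonneg (hβ i hi) n)
      fun i hi => pow_le_ascPochhammer_eval (hβ i hi) n
  have hβs : 0 ≤ ∏ i ∈ s, β i := Finset.prod_nonneg hβ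
  calc (2 * c * ∏ i ∈ s, β i) ^ n = 2 ^ n * c ^ n * (∏ i ∈ s, β i) ^ n := by
        rw [mul_pow, mul_pow]
    _ ≤ (2 * n !) * c ^ n * ∏ i ∈ s, (ascPochhammer ℝ n).eval (β i) := by gcongr
    _ = 2 * (n ! * c ^ n * ∏ i ∈ s, (ascPochhammer ℝ n).eval (β i)) := by ring

theorem norm_tsum_le_of_norm_le_two_mul_pow {E : Type*} [NormedAddCommGroup E] {a : ℕ → E}
    {r : ℝ} (hr0 : 0 ≤ r) (hr1 : r < 1) (h0 : ‖a 0‖ ≤ 1)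
    (h : ∀ n, ‖a (n + 1)‖ ≤ 2 * r ^ (n + 1)) : ‖∑' n, a n‖ ≤ (1 + r) / (1 - r) := by
  have hgeom : Summable (fun n => 2 * r * r ^ n) :=
    (summable_geometric_of_lt_one hr0 hr1).mul_left (2 * r)
  have hbound : ∀ n, ‖a (n + 1)‖ ≤ 2 * r * r ^ n := fun n => (h n).trans_eq (by ring)
  have htail : Summable (fun n => ‖a (n + 1)‖) :=
    hgeom.of_nonneg_of_le (fun _ => norm_nonneg _) hbound
  have hsum : Summable (fun n => ‖a n‖) := (summable_nat_add_iff 1).mp htail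
  calc ‖∑' n, a n‖ ≤ ∑' n, ‖a n‖ := norm_tsum_le_tsum_norm hsum
    _ = ‖a 0‖ + ∑' n, ‖a (n + 1)‖ := hsum.tsum_eq_zero_add
    _ ≤ 1 + ∑' n, 2 * r * r ^ n := add_le_add h0 (htail.tsum_le_tsum hbound hgeom)
    _ = 1 + 2 * r * (1 - r)⁻¹ := by rw [tsum_mul_left, tsum_geometric_of_lt_one hr0 hr1]
    _ = (1 + r) / (1 - r) := by
        field_simp [(sub_pos.mpr hr1).ne']
        ring

theorem hyperBessel_abs_bound_general (d : ℕ) (α : Fin d → ℝ)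
    (hα : ∀ i, α i > -1)
    (lam mu : ℝ) (hlam : lam = (d + 1 : ℝ) ^ (d + 1)) (hmu : mu = ∏ i, (α i + 1))
    (hcond : 2 * lam * mu > 1)
    (A : ℕ → ℝ)
    (hA : ∀ n, A n = (-1) ^ n /
      (n.factorial * (d + 1 : ℝ) ^ (n * (d + 1)) * ∏ i, (ascPochhammer ℝ n).eval (α i + 1)))
    (f : ℂ → ℂ) (hf : ∀ z, f z = ∑' n : ℕ, (A n : ℂ) * z ^ (n * (d + 1) + 1)) :
    ∀ z : ℂ, ‖z‖ < 1 → ‖f z‖ ≤ (2 * lam * mu + 1) / (2 * lam * mu - 1) := by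
  intro z hz
  have hx : 0 < 2 * lam * mu := by linarith
  have hcoeff : ∀ n, |A n| ≤ 2 * (2 * lam * mu)⁻¹ ^ n := by
    intro n
    have hden := pow_le_two_mul_factorial_mul_pow_mul_prod_ascPochhammer Finset.univ
      (by rw [hlam]; positivity : 0 ≤ lam) (fun i _ => (by linarith [hα i] : 0 ≤ α i + 1)) n
    rw [← hmu] at hden
    have hpos : 0 < (2 * lam * mu) ^ n := pow_pos hx n
    have hD : 0 < n.factorial * lam ^ n * ∏ i, (ascPochhammer ℝ n).eval (α i + 1) := by linarith
    have hAn : |A n| = 1 / (n.factorial * lam ^ n * ∏ i, (ascPochhammer ℝ n).eval (α i + 1)) := by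
      rw [hA n, mul_comm n, pow_mul, ← hlam, abs_div, abs_pow, abs_neg, abs_one, one_pow,
        abs_of_pos hD]
    rw [hAn, inv_pow, ← div_eq_mul_inv, div_le_div_iff₀ hD hpos]
    linarith
  have hterm : ∀ n, ‖(A n : ℂ) * z ^ (n * (d + 1) + 1)‖ ≤ |A n| := fun n => by
    rw [norm_mul, norm_real, Real.norm_eq_abs, norm_pow]
    exact mul_le_of_le_one_right (abs_nonneg _) (pow_le_one₀ (norm_nonneg z) hz.le)
  have hA0 : A 0 = 1 := by simp [hA]
  rw [hf z]
  convert norm_tsum_le_of_norm_le_two_mul_pow (a := fun n => (A n : ℂ) * z ^ (n * (d + 1) + 1))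
    (inv_nonneg.mpr hx.le) (inv_lt_one_of_one_lt₀ hcond)
    ((hterm 0).trans_eq (by rw [hA0, abs_one])) (fun n => (hterm (n + 1)).trans (hcoeff (n + 1)))
    using 1
  rw [eq_comm, ← mul_div_mul_left _ _ hx.ne', mul_add, mul_sub, mul_inv_cancel₀ hx.ne', mul_one]

theorem hyperBessel_abs_bound (d : ℕ) (hd : 1 ≤ d) (α : Fin d → ℝ)
    (hα : ∀ i, α i > -1)
    (lam mu : ℝ) (hlam : lam = (d + 1 : ℝ) ^ (d + 1)) (hmu : mu = ∏ i, (α i + 1))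
    (hcond : 2 * lam * mu > 1)
    (A : ℕ → ℝ)
    (hA : ∀ n, A n = (-1) ^ n /
      (n.factorial * (d + 1 : ℝ) ^ (n * (d + 1)) * ∏ i, (ascPochhammer ℝ n).eval (α i + 1)))
    (f : ℂ → ℂ) (hf : ∀ z, f z = ∑' n : ℕ, (A n : ℂ) * z ^ (n * (d + 1) + 1)) :
    ∀ z : ℂ, ‖z‖ < 1 → ‖f z‖ ≤ (2 * lam * mu + 1) / (2 * lam * mu - 1) :=
  hyperBessel_abs_bound_general d α hα lam mu hlam hmu hcond A hA f hf
end

section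
/- Let d ≥ 1 be an integer, α_1, …, α_d real numbers with α_i > -1, λ = (d+1)^(d+1), μ = ∏_{i=1}^d (α_i+1), and assume 2λμ > 1. With A_n = (-1)^n / (n! (d+1)^(n(d+1)) ∏_{i=1}^d (α_i+1)_n), the inequality ((2λμ-1)/2) · ∑_{n≥1} |A_n| ≤ 1 holds. -/
lemma ascPochhammer_eval_prod (n : ℕ) (t : ℝ) :
    (ascPochhammer ℝ n).eval t = ∏ k ∈ Finset.range n, (t + k) := by
  induction n with
  | zero => simp
  | succ n ih =>
      rw [ascPochhammer_succ_right, Finset.prod_range_succ, ← ih]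
      simp [mul_comm, mul_assoc, mul_left_comm]

lemma ascPochhammer_eval_ge (n : ℕ) (t : ℝ) (ht : 0 < t) :
    t ^ n ≤ (ascPochhammer ℝ n).eval t := by
  rw [ascPochhammer_eval_prod]
  calc t ^ n = ∏ _k ∈ Finset.range n, t := by simp
  _ ≤ _ := Finset.prod_le_prod (fun k _ => ht.le)
      (fun k _ => le_add_of_nonneg_right (Nat.cast_nonneg k))

lemma ascPochhammer_eval_pos (n : ℕ) (t : ℝ) (ht : 0 < t) :
    0 < (ascPochhammer ℝ n).eval t := by
  calc (0:ℝ) < t ^ n := by positivity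
  _ ≤ _ := ascPochhammer_eval_ge n t ht

lemma two_pow_le_factorial_succ (n : ℕ) : 2 ^ n ≤ (n + 1).factorial := by
  induction n with
  | zero => simp
  | succ n ih =>
      rw [pow_succ, Nat.factorial_succ]
      calc 2 ^ n * 2 ≤ (n + 1).factorial * 2 := by gcongr
      _ ≤ (n + 1 + 1) * (n + 1).factorial := by
          rw [mul_comm]; gcongr; omega

theorem hyperBessel_coeff_sum_bound (d : ℕ) (hd : 1 ≤ d) (α : Fin d → ℝ)
    (hα : ∀ i, α i > -1)
    (lam mu : ℝ) (hlam : lam = (d + 1 : ℝ) ^ (d + 1)) (hmu : mu = ∏ i, (α i + 1))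
    (hcond : 2 * lam * mu > 1)
    (A : ℕ → ℝ)
    (hA : ∀ n, A n = (-1) ^ n /
      (n.factorial * (d + 1 : ℝ) ^ (n * (d + 1)) * ∏ i, (ascPochhammer ℝ n).eval (α i + 1))) :
    (2 * lam * mu - 1) / 2 * ∑' n : ℕ, |A (n + 1)| ≤ 1 := by
  have hαpos : ∀ i, (0:ℝ) < α i + 1 := fun i => by linarith [hα i]
  have hμpos : 0 < mu := by rw [hmu]; exact Finset.prod_pos (fun i _ => hαpos i)
  have hlampos : 0 < lam := by rw [hlam]; positivity
  set c : ℝ := lam * mu with hc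
  have hcpos : 0 < c := mul_pos hlampos hμpos
  have h2c : 1 < 2 * c := by rw [hc]; nlinarith [hcond]
  -- key pointwise bound
  have key : ∀ n : ℕ, |A (n + 1)| ≤ (1 / c) * (1 / (2 * c)) ^ n := by
    intro n
    have hP : ∀ i : Fin d, (0:ℝ) < (ascPochhammer ℝ (n + 1)).eval (α i + 1) :=
      fun i => ascPochhammer_eval_pos _ _ (hαpos i)
    set P : ℝ := ∏ i, (ascPochhammer ℝ (n + 1)).eval (α i + 1) with hPdef
    have hPpos : 0 < P := Finset.prod_pos (fun i _ => hP i)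
    have hPge : mu ^ (n + 1) ≤ P := by
      rw [hmu, ← Finset.prod_pow]
      exact Finset.prod_le_prod (fun i _ => pow_nonneg (hαpos i).le _)
        (fun i _ => ascPochhammer_eval_ge _ _ (hαpos i))
    have hpow : ((d:ℝ) + 1) ^ ((n + 1) * (d + 1)) = lam ^ (n + 1) := by
      rw [hlam, ← pow_mul, mul_comm]
    have hfact : (2:ℝ) ^ n ≤ ((n + 1).factorial : ℝ) := by
      calc (2:ℝ) ^ n = ((2 ^ n : ℕ) : ℝ) := by push_cast; ring
      _ ≤ _ := by exact_mod_cast two_pow_le_factorial_succ n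
    have hDge : c * (2 * c) ^ n ≤
        ((n + 1).factorial : ℝ) * ((d:ℝ) + 1) ^ ((n + 1) * (d + 1)) * P := by
      have h1 : c * (2 * c) ^ n = 2 ^ n * (lam ^ (n + 1) * mu ^ (n + 1)) := by
        rw [hc]; ring
      rw [h1, hpow]
      calc (2:ℝ) ^ n * (lam ^ (n + 1) * mu ^ (n + 1))
          ≤ ((n + 1).factorial : ℝ) * (lam ^ (n + 1) * P) := by
            apply mul_le_mul hfact _ (by positivity) (by positivity)
            exact mul_le_mul_of_nonneg_left hPge (by positivity)
      _ = ((n + 1).factorial : ℝ) * lam ^ (n + 1) * P := by ring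
    have hDpos : (0:ℝ) < ((n + 1).factorial : ℝ) * ((d:ℝ) + 1) ^ ((n + 1) * (d + 1)) * P := by
      have : (0:ℝ) < ((n + 1).factorial : ℝ) := by positivity
      positivity
    have hAval : |A (n + 1)| =
        1 / (((n + 1).factorial : ℝ) * ((d:ℝ) + 1) ^ ((n + 1) * (d + 1)) * P) := by
      rw [hA (n + 1), abs_div, abs_pow, abs_neg, abs_one, one_pow,
        abs_of_pos hDpos]
    rw [hAval]
    have : (1 / c) * (1 / (2 * c)) ^ n = 1 / (c * (2 * c) ^ n) := by
      rw [div_pow, one_pow, div_mul_div_comm, one_mul]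
    rw [this]
    exact one_div_le_one_div_of_le (by positivity) hDge
  -- summability
  have hr0 : (0:ℝ) ≤ 1 / (2 * c) := by positivity
  have hr1 : 1 / (2 * c) < 1 := by
    rw [div_lt_one (by linarith)]; linarith
  have hsumg : Summable (fun n : ℕ => (1 / c) * (1 / (2 * c)) ^ n) :=
    (summable_geometric_of_lt_one hr0 hr1).mul_left _
  have hsumA : Summable (fun n : ℕ => |A (n + 1)|) :=
    hsumg.of_nonneg_of_le (fun n => abs_nonneg _) key
  have hts : ∑' n : ℕ, |A (n + 1)| ≤ (1 / c) * (1 - 1 / (2 * c))⁻¹ := by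
    calc ∑' n : ℕ, |A (n + 1)| ≤ ∑' n : ℕ, (1 / c) * (1 / (2 * c)) ^ n :=
          Summable.tsum_le_tsum key hsumA hsumg
    _ = (1 / c) * (1 - 1 / (2 * c))⁻¹ := by
          rw [tsum_mul_left, tsum_geometric_of_lt_one hr0 hr1]
  have hval : (1 / c) * (1 - 1 / (2 * c))⁻¹ = 2 / (2 * c - 1) := by
    have h2cne : (2 * c) ≠ 0 := by positivity
    have : 1 - 1 / (2 * c) = (2 * c - 1) / (2 * c) := by field_simp
    rw [this]
    field_simp
  rw [hval] at hts
  have h2c1 : 0 < 2 * c - 1 := by linarith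
  have hfinal : (2 * lam * mu - 1) / 2 = (2 * c - 1) / 2 := by rw [hc]; ring_nf
  rw [hfinal]
  calc (2 * c - 1) / 2 * ∑' n : ℕ, |A (n + 1)|
      ≤ (2 * c - 1) / 2 * (2 / (2 * c - 1)) := by
        apply mul_le_mul_of_nonneg_left hts (by positivity)
  _ = 1 := by field_simp
end

section
/- Let d ≥ 1 be an integer, α_1, …, α_d real numbers with α_i > -1, λ = (d+1)^(d+1), μ = ∏_{i=1}^d (α_i+1), and assume 2λμ > 1. With A_n = (-1)^n / (n! (d+1)^(n(d+1)) ∏_{i=1}^d (α_i+1)_n), the inequality ((2λμ-1)²/(4λ²μ(μ+1)-1)) · ∑_{n≥1} (n(d+1)+1) |A_n| ≤ 1 holds. -/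
open Polynomial

lemma pow_le_ascPochhammer_eval_s6 {y : ℝ} (hy : 0 ≤ y) (n : ℕ) :
    y ^ n ≤ (ascPochhammer ℝ n).eval y := by
  induction n with
  | zero => simp
  | succ n ih =>
    rw [ascPochhammer_succ_eval, pow_succ]
    have h1 : (0:ℝ) ≤ y ^ n := pow_nonneg hy n
    exact mul_le_mul ih (le_add_of_nonneg_right (Nat.cast_nonneg n)) hy (h1.trans ih)

lemma prod_add_one_le_aux {ι : Type*} {s : Finset ι} (hs : s.Nonempty) (f : ι → ℝ)
    (hf : ∀ i ∈ s, 0 ≤ f i) :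
    (∏ i ∈ s, f i) + 1 ≤ ∏ i ∈ s, (f i + 1) := by
  induction hs using Finset.Nonempty.cons_induction with
  | singleton a => simp
  | cons a s ha hs ih =>
    rw [Finset.prod_cons, Finset.prod_cons]
    have h0 : 0 ≤ f a := hf a (Finset.mem_cons_self a s)
    have h1 : ∀ i ∈ s, 0 ≤ f i := fun i hi => hf i (Finset.mem_cons_of_mem hi)
    have h2 : 0 ≤ ∏ i ∈ s, f i := Finset.prod_nonneg h1
    nlinarith [ih h1]

set_option maxHeartbeats 1000000 in
theorem hyperBessel_deriv_coeff_sum_bound (d : ℕ) (hd : 1 ≤ d) (α : Fin d → ℝ)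
    (hα : ∀ i, α i > -1)
    (lam mu : ℝ) (hlam : lam = (d + 1 : ℝ) ^ (d + 1)) (hmu : mu = ∏ i, (α i + 1))
    (hcond : 2 * lam * mu > 1)
    (A : ℕ → ℝ)
    (hA : ∀ n, A n = (-1) ^ n /
      (n.factorial * (d + 1 : ℝ) ^ (n * (d + 1)) * ∏ i, (ascPochhammer ℝ n).eval (α i + 1))) :
    (2 * lam * mu - 1) ^ 2 / (4 * lam ^ 2 * mu * (mu + 1) - 1) *
      ∑' n : ℕ, (((n + 1) * (d + 1) + 1 : ℕ) : ℝ) * |A (n + 1)| ≤ 1 := by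
  have hd1 : (1:ℝ) ≤ (d:ℝ) := by exact_mod_cast hd
  have hlamd : ((d:ℝ) + 1) ^ 2 ≤ lam := by
    rw [hlam]
    apply pow_le_pow_right₀ (by linarith)
    omega
  have hlam4 : (4:ℝ) ≤ lam := by nlinarith
  have hlam0 : (0:ℝ) < lam := by linarith
  have hmu0 : 0 < mu := by nlinarith
  have hαpos : ∀ i, 0 < α i + 1 := fun i => by linarith [hα i]
  set L : ℝ := lam * (mu + 1) with hLdef
  have hL9 : (9:ℝ)/2 ≤ L := by
    have : lam * (mu + 1) = lam + lam * mu := by ring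
    rw [hLdef, this]; nlinarith
  have hL0 : (0:ℝ) < L := by linarith
  set q : ℝ := L⁻¹ with hqdef
  have hq0 : 0 ≤ q := by positivity
  have hq29 : q ≤ 2/9 := by
    rw [hqdef]
    rw [inv_le_comm₀ (by linarith) (by norm_num)]
    linarith
  have hq1 : q < 1 := by linarith
  have hlm0 : (0:ℝ) < lam * mu := by positivity
  -- per-term bound
  have key : ∀ n : ℕ, (((n + 1) * (d + 1) + 1 : ℕ) : ℝ) * |A (n + 1)| ≤
      ((d:ℝ) + 2) / (lam * mu) * q ^ n := by
    intro n
    have hPfac : ∀ i : Fin d, (ascPochhammer ℝ (n+1)).eval (α i + 1)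
        = (α i + 1) * (ascPochhammer ℝ n).eval (α i + 1 + 1) := by
      intro i
      rw [ascPochhammer_succ_left]
      simp [eval_mul, eval_comp]
    have hP0 : (0:ℝ) < ∏ i, (ascPochhammer ℝ (n+1)).eval (α i + 1) :=
      Finset.prod_pos fun i _ => ascPochhammer_pos _ _ (hαpos i)
    have hmu1prod : mu + 1 ≤ ∏ i, (α i + 1 + 1) := by
      rw [hmu]
      have hne : (Finset.univ : Finset (Fin d)).Nonempty := ⟨⟨0, by omega⟩, Finset.mem_univ _⟩
      exact prod_add_one_le_aux hne _ fun i _ => (hαpos i).le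
    have hprodP : mu * (mu + 1) ^ n ≤ ∏ i, (ascPochhammer ℝ (n+1)).eval (α i + 1) := by
      calc mu * (mu + 1) ^ n ≤ mu * (∏ i, (α i + 1 + 1)) ^ n := by
            have := pow_le_pow_left₀ (by linarith) hmu1prod n
            nlinarith
        _ = ∏ i, ((α i + 1) * (α i + 1 + 1) ^ n) := by
            rw [hmu, Finset.prod_mul_distrib, Finset.prod_pow]
        _ ≤ ∏ i, (ascPochhammer ℝ (n+1)).eval (α i + 1) := by
            apply Finset.prod_le_prod
            · intro i _
              have := hαpos i
              positivity
            · intro i _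
              rw [hPfac i]
              have := pow_le_ascPochhammer_eval_s6 (by linarith [hαpos i] : (0:ℝ) ≤ α i + 1 + 1) n
              nlinarith [hαpos i]
    have hfac0 : (0:ℝ) < ((n+1).factorial : ℝ) := by exact_mod_cast (n+1).factorial_pos
    have hpow : (d + 1 : ℝ) ^ ((n+1) * (d + 1)) = lam ^ (n+1) := by
      rw [hlam, ← pow_mul, Nat.mul_comm]
    have hApos : |A (n+1)| =
        1 / (((n+1).factorial : ℝ) * lam ^ (n+1) * ∏ i, (ascPochhammer ℝ (n+1)).eval (α i + 1)) := by
      rw [hA, hpow, abs_div, abs_pow, abs_neg, abs_one, one_pow]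
      congr 1
      exact abs_of_pos (by positivity)
    have hcast : (((n + 1) * (d + 1) + 1 : ℕ) : ℝ) = ((n:ℝ)+1)*((d:ℝ)+1)+1 := by
      push_cast; ring
    rw [hApos, hcast, mul_one_div]
    have hqpow : ((d:ℝ) + 2) / (lam * mu) * q ^ n = ((d:ℝ) + 2) / (lam * mu * L ^ n) := by
      rw [hqdef, inv_pow]
      field_simp
    rw [hqpow, div_le_div_iff₀ (by positivity) (by positivity)]
    have hden : ((n:ℝ)+1) * (lam * mu * L ^ n) ≤
        ((n+1).factorial : ℝ) * lam ^ (n+1) * ∏ i, (ascPochhammer ℝ (n+1)).eval (α i + 1) := by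
      have hfacge : ((n:ℝ)+1) ≤ ((n+1).factorial : ℝ) := by
        exact_mod_cast Nat.self_le_factorial (n+1)
      have hrw : lam * mu * L ^ n = lam ^ (n+1) * (mu * (mu + 1) ^ n) := by
        rw [hLdef, mul_pow, pow_succ]; ring
      rw [hrw]
      calc ((n:ℝ)+1) * (lam ^ (n+1) * (mu * (mu + 1) ^ n))
          ≤ ((n+1).factorial : ℝ) * (lam ^ (n+1) * (mu * (mu + 1) ^ n)) := by
            apply mul_le_mul_of_nonneg_right hfacge
            positivity
        _ ≤ ((n+1).factorial : ℝ) * (lam ^ (n+1) * ∏ i, (ascPochhammer ℝ (n+1)).eval (α i + 1)) := by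
            apply mul_le_mul_of_nonneg_left _ (by positivity)
            exact mul_le_mul_of_nonneg_left hprodP (by positivity)
        _ = _ := by ring
    calc (((n:ℝ)+1)*((d:ℝ)+1)+1) * (lam * mu * L ^ n)
        ≤ (((n:ℝ)+1)*((d:ℝ)+2)) * (lam * mu * L ^ n) := by
          have h1 : ((n:ℝ)+1)*((d:ℝ)+1)+1 ≤ ((n:ℝ)+1)*((d:ℝ)+2) := by
            have : (0:ℝ) ≤ (n:ℝ) := Nat.cast_nonneg n
            nlinarith
          have h2 : (0:ℝ) ≤ lam * mu * L ^ n := by positivity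
          exact mul_le_mul_of_nonneg_right h1 h2
      _ = ((d:ℝ)+2) * (((n:ℝ)+1) * (lam * mu * L ^ n)) := by ring
      _ ≤ ((d:ℝ)+2) * (((n+1).factorial : ℝ) * lam ^ (n+1) *
            ∏ i, (ascPochhammer ℝ (n+1)).eval (α i + 1)) := by
          exact mul_le_mul_of_nonneg_left hden (by linarith)
  -- summability and tsum bound
  have hgeo : Summable (fun n : ℕ => ((d:ℝ) + 2) / (lam * mu) * q ^ n) :=
    (summable_geometric_of_lt_one hq0 hq1).mul_left _
  have htnn : ∀ n : ℕ, 0 ≤ (((n + 1) * (d + 1) + 1 : ℕ) : ℝ) * |A (n + 1)| :=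
    fun n => mul_nonneg (Nat.cast_nonneg _) (abs_nonneg _)
  have hsummable : Summable (fun n : ℕ => (((n + 1) * (d + 1) + 1 : ℕ) : ℝ) * |A (n + 1)|) :=
    Summable.of_nonneg_of_le htnn key hgeo
  have hts : ∑' n : ℕ, (((n + 1) * (d + 1) + 1 : ℕ) : ℝ) * |A (n + 1)| ≤
      ((d:ℝ) + 2) / (lam * mu) * (1 - q)⁻¹ := by
    calc ∑' n : ℕ, (((n + 1) * (d + 1) + 1 : ℕ) : ℝ) * |A (n + 1)|
        ≤ ∑' n : ℕ, ((d:ℝ) + 2) / (lam * mu) * q ^ n := Summable.tsum_le_tsum key hsummable hgeo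
      _ = ((d:ℝ) + 2) / (lam * mu) * ∑' n : ℕ, q ^ n := tsum_mul_left
      _ = _ := by rw [tsum_geometric_of_lt_one hq0 hq1]
  have h97 : (1 - q)⁻¹ ≤ 9/7 := by
    rw [inv_le_comm₀ (by linarith) (by norm_num)]
    linarith
  have hbound : ∑' n : ℕ, (((n + 1) * (d + 1) + 1 : ℕ) : ℝ) * |A (n + 1)| ≤
      9 * ((d:ℝ) + 2) / (7 * (lam * mu)) := by
    calc ∑' n : ℕ, (((n + 1) * (d + 1) + 1 : ℕ) : ℝ) * |A (n + 1)|
        ≤ ((d:ℝ) + 2) / (lam * mu) * (1 - q)⁻¹ := hts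
      _ ≤ ((d:ℝ) + 2) / (lam * mu) * (9/7) := by
          apply mul_le_mul_of_nonneg_left h97 (by positivity)
      _ = 9 * ((d:ℝ) + 2) / (7 * (lam * mu)) := by ring
  have hD' : (0:ℝ) < 4 * lam ^ 2 * mu * (mu + 1) - 1 := by nlinarith
  have hF0 : (0:ℝ) ≤ (2 * lam * mu - 1) ^ 2 / (4 * lam ^ 2 * mu * (mu + 1) - 1) := by
    positivity
  calc (2 * lam * mu - 1) ^ 2 / (4 * lam ^ 2 * mu * (mu + 1) - 1) *
        ∑' n : ℕ, (((n + 1) * (d + 1) + 1 : ℕ) : ℝ) * |A (n + 1)|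
      ≤ (2 * lam * mu - 1) ^ 2 / (4 * lam ^ 2 * mu * (mu + 1) - 1) *
        (9 * ((d:ℝ) + 2) / (7 * (lam * mu))) := mul_le_mul_of_nonneg_left hbound hF0
    _ ≤ 1 := by
        rw [div_mul_div_comm, div_le_one (by positivity)]
        have h79 : 9 * ((d:ℝ) + 2) ≤ 7 * lam := by nlinarith
        nlinarith [mul_nonneg (sub_nonneg.mpr h79) (sq_nonneg (2*lam*mu)),
          mul_nonneg (by linarith : (0:ℝ) ≤ 2*lam*mu)
            (by nlinarith : (0:ℝ) ≤ (2*lam*mu)^2 - 1),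
          mul_pos hlam0 hmu0]
end

section
/- For every complex number z with |z| < 1 and z ≠ 0, Re( sin(z)/z ) > 0. -/
/-! On the closed unit disk Mathlib's Taylor bound `Complex.sin_bound` puts `sin z / z` within
`1/6 + 1/100` of `1`, so it lies in the right half-plane. -/

open Complex

theorem Complex.re_pos_of_norm_sub_one_lt {w : ℂ} (h : ‖w - 1‖ < 1) : 0 < w.re := by
  have h_re : |w.re - 1| < 1 := by
    simpa using (abs_re_le_norm (w - 1)).trans_lt h
  linarith [(abs_lt.mp h_re).1]

theorem Complex.norm_sin_sub_self_le {z : ℂ} (hz : ‖z‖ ≤ 1) :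
    ‖sin z - z‖ ≤ ‖z‖ ^ 3 / 6 + ‖z‖ ^ 5 / 100 :=
  calc ‖sin z - z‖ = ‖(sin z - (z - z ^ 3 / 6)) - z ^ 3 / 6‖ := by ring_nf
    _ ≤ ‖sin z - (z - z ^ 3 / 6)‖ + ‖z ^ 3 / 6‖ := norm_sub_le _ _
    _ ≤ ‖z‖ ^ 5 / 100 + ‖z‖ ^ 3 / 6 := by
      gcongr
      · exact sin_bound hz
      · simp [norm_pow]
    _ = ‖z‖ ^ 3 / 6 + ‖z‖ ^ 5 / 100 := add_comm _ _

theorem Complex.norm_sin_div_self_sub_one_lt {z : ℂ} (hz : ‖z‖ ≤ 1) (hz0 : z ≠ 0) :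
    ‖sin z / z - 1‖ < 1 := by
  have hr : 0 < ‖z‖ := norm_pos_iff.mpr hz0
  rw [div_sub_one hz0, norm_div, div_lt_one hr]
  calc ‖sin z - z‖ ≤ ‖z‖ ^ 3 / 6 + ‖z‖ ^ 5 / 100 := norm_sin_sub_self_le hz
    _ < ‖z‖ := by
      have h2 : ‖z‖ ^ 2 ≤ 1 := pow_le_one₀ hr.le hz
      have h4 : ‖z‖ ^ 4 ≤ 1 := pow_le_one₀ hr.le hz
      nlinarith

theorem re_sin_div_pos (z : ℂ) (hz : ‖z‖ < 1) (hz0 : z ≠ 0) :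
    (Complex.sin z / z).re > 0 :=
  re_pos_of_norm_sub_one_lt (norm_sin_div_self_sub_one_lt hz.le hz0)
end
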